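/- Let α ≥ 1 and j ∈ {1,...,10}, and let z ∈ ℤ_11 with z ≡ 2/√5 + j·11^{2α−1} (mod 11^{2α}), where √5 ≡ 7 (mod 11). Then the polynomial f_z(y) = y^2 − √5·z·y + 1 has no root in ℤ_11. -/

import Mathlib

instance : Fact (Nat.Prime 11) := ⟨by norm_num⟩

/-! Writing `z = 2/√5 + 11^(2α-1) (11 t + j)`, any root `y` of `f_z` is a unit (its product with
`√5 z - y` is `1`) and satisfies `(y - 1)² = √5 y (z - 2/√5) = 11^(2α-1) · √5 (11 t + j) y`.
The right-hand side is an odd power of `11` times a unit, so it has odd valuation and cannot be a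
square. -/

namespace PadicInt

variable {p : ℕ} [Fact p.Prime]

theorem valuation_of_isUnit {u : ℤ_[p]} (hu : IsUnit u) : u.valuation = 0 := by
  obtain ⟨v, huv⟩ := hu.exists_right_inv
  have hv : v ≠ 0 := right_ne_zero_of_mul_eq_one huv
  have := congrArg valuation huv
  rw [valuation_mul hu.ne_zero hv, valuation_one] at this
  omega

theorem isUnit_natCast_of_not_dvd {n : ℕ} (hn : ¬p ∣ n) : IsUnit (n : ℤ_[p]) :=
  isUnit_iff.mpr <| norm_natCast_eq_one_iff.mpr <|
    (Nat.Prime.coprime_iff_not_dvd Fact.out).mpr hn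

theorem isUnit_p_mul_add_natCast {n : ℕ} (hn : ¬p ∣ n) (t : ℤ_[p]) :
    IsUnit ((p : ℤ_[p]) * t + n) := by
  have h := isUnit_natCast_of_not_dvd hn
  rw [show (n : ℤ_[p]) = (p * t + n) + -(p * t) by ring] at h
  refine (IsLocalRing.isUnit_or_isUnit_of_isUnit_add h).resolve_right fun hpt => ?_
  exact p_nonunit (isUnit_of_mul_isUnit_left ((IsUnit.neg_iff _).mp hpt))

theorem sq_ne_p_pow_odd_mul_unit {u : ℤ_[p]} (hu : IsUnit u) (x : ℤ_[p]) (k : ℕ) :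
    x ^ 2 ≠ (p : ℤ_[p]) ^ (2 * k + 1) * u := by
  intro h
  have hx : x ≠ 0 := by
    rintro rfl
    exact mul_ne_zero (pow_ne_zero _ (NeZero.ne _)) hu.ne_zero (by rw [← h]; ring)
  have hval := congrArg valuation h
  rw [valuation_pow, valuation_p_pow_mul _ _ hu.ne_zero, valuation_of_isUnit hu] at hval
  omega

end PadicInt

theorem stmt_15_general (α : ℕ) (hα : 1 ≤ α) (j : ℕ) (hj1 : 1 ≤ j) (hj10 : j ≤ 10)
    (s : ℤ_[11])
    (w : ℤ_[11]) (hw : s * w = 2)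
    (z : ℤ_[11])
    (hz : (11 : ℤ_[11]) ^ (2 * α) ∣ (z - (w + (j : ℤ_[11]) * 11 ^ (2 * α - 1)))) :
    ∀ y : ℤ_[11], y ^ 2 - s * z * y + 1 ≠ 0 := by
  intro y hy
  obtain ⟨t, ht⟩ := hz
  obtain ⟨k, rfl⟩ : ∃ k, α = k + 1 := ⟨α - 1, by omega⟩
  rw [show 2 * (k + 1) - 1 = 2 * k + 1 by omega] at ht
  have hs_unit : IsUnit s := isUnit_of_mul_isUnit_left (y := w) <| by
    simpa [hw] using PadicInt.isUnit_natCast_of_not_dvd (p := 11) (n := 2) (by norm_num)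
  have hy_unit : IsUnit y := IsUnit.of_mul_eq_one (s * z - y) (by linear_combination -hy)
  have hj_unit : IsUnit (11 * t + j) := by
    simpa using PadicInt.isUnit_p_mul_add_natCast (p := 11) (n := j) (by omega) t
  apply PadicInt.sq_ne_p_pow_odd_mul_unit ((hs_unit.mul hj_unit).mul hy_unit) (y - 1) k
  push_cast
  linear_combination hy + (s * y) * ht + y * hw

/-- For `α ≥ 1`, `1 ≤ j ≤ 10`, and `z ≡ 2/√5 + j·11^(2α−1) (mod 11^(2α))` (with
`√5 ≡ 7 mod 11`), the polynomial `f_z(y) = y² − √5·z·y + 1` has no root in `ℤ_11`. -/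
theorem stmt_15 (α : ℕ) (hα : 1 ≤ α) (j : ℕ) (hj1 : 1 ≤ j) (hj10 : j ≤ 10)
    (s : ℤ_[11]) (hs : s ^ 2 = 5) (hs7 : (11 : ℤ_[11]) ∣ (s - 7))
    (w : ℤ_[11]) (hw : s * w = 2)
    (z : ℤ_[11])
    (hz : (11 : ℤ_[11]) ^ (2 * α) ∣ (z - (w + (j : ℤ_[11]) * 11 ^ (2 * α - 1)))) :
    ∀ y : ℤ_[11], y ^ 2 - s * z * y + 1 ≠ 0 :=
  stmt_15_general α hα j hj1 hj10 s w hw z hz
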